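/- arXiv:math/9902036 — 6 statements merged into one kernel-verified Lean document; each statement's English description precedes it below -/
import Mathlib

section
/- Let m ≥ 1 be an integer and let A_m be the (m+1)×(m+1) real matrix defined below. Then the characteristic polynomial of A_m factors over the reals as ∏_{s=0}^{m} (X − (3m/2 + (m−2s)·√17/2)); equivalently, the eigenvalues of A_m, counted with multiplicity, are exactly the m+1 numbers s·λ₁ + (m−s)·λ₂ for s = 0, 1, …, m, where λ₁ = (3−√17)/2 and λ₂ = (3+√17)/2 are the two roots of x² − 3x − 2 = 0. -/
/-- The tridiagonal matrix `A_m` of the paper: `(A_m)_{i,i} = 3 i`,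
`(A_m)_{i,i+1} = 2 (i+1)`, `(A_m)_{i+1,i} = m - i`, all other entries `0`. -/
noncomputable def paperA (m : ℕ) : Matrix (Fin (m + 1)) (Fin (m + 1)) ℝ :=
  Matrix.of fun i j =>
    if (i : ℕ) = (j : ℕ) then 3 * ((i : ℕ) : ℝ)
    else if (j : ℕ) = (i : ℕ) + 1 then 2 * (((i : ℕ) : ℝ) + 1)
    else if (i : ℕ) = (j : ℕ) + 1 then (m : ℝ) - ((j : ℕ) : ℝ)
    else 0

/-!
`A_m` is the matrix, in the monomial basis `1, X, …, X^m`, of the operator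
`L p = m X p + (2 + 3X - X²) p'`, which preserves polynomials of degree `≤ m`:
column `j` of `A_m` lists the coefficients of `L X^j`. Since
`2 + 3X - X² = -(X - λ₁)(X - λ₂)`, logarithmic differentiation shows that
`(X - λ₂)^s (X - λ₁)^(m-s)` is an eigenvector of `L` with eigenvalue `s λ₁ + (m - s) λ₂`.
These `m + 1` eigenvalues are distinct, so they are all the roots of the monic
characteristic polynomial of degree `m + 1`.
-/

open Polynomial Matrix

theorem Matrix.charpoly_eq_prod_of_mulVec_eq_smul {R n : Type*} [CommRing R] [IsDomain R]
    [Fintype n] [DecidableEq n] (A : Matrix n n R) {μ : n → R} (hμ : Function.Injective μ)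
    {v : n → n → R} (hv : ∀ i, v i ≠ 0) (hAv : ∀ i, A *ᵥ v i = μ i • v i) :
    A.charpoly = ∏ i, (X - C (μ i)) := by
  have hroots : Finset.univ.val.map μ ≤ A.charpoly.roots := by
    refine (Multiset.le_iff_subset (Finset.univ.nodup.map hμ)).2 fun x hx => ?_
    obtain ⟨i, -, rfl⟩ := Multiset.mem_map.1 hx
    rw [mem_roots A.charpoly_monic.ne_zero, IsRoot, eval_charpoly,
      ← exists_mulVec_eq_zero_iff]
    exact ⟨v i, hv i, by simp [sub_mulVec, hAv]⟩
  have hdvd : ∏ i, (X - C (μ i)) ∣ A.charpoly := by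
    have := (Multiset.prod_X_sub_C_dvd_iff_le_roots A.charpoly_monic.ne_zero _).2 hroots
    rwa [Multiset.map_map] at this
  exact eq_of_monic_of_dvd_of_natDegree_le (monic_prod_of_monic _ _ fun i _ => monic_X_sub_C _)
    A.charpoly_monic hdvd (by simp [natDegree_prod_of_monic _ _ fun i _ => monic_X_sub_C (μ i)])

theorem Polynomial.X_sub_C_mul_derivative_X_sub_C_pow {R : Type*} [CommRing R] (a : R) (s : ℕ) :
    (X - C a) * derivative ((X - C a) ^ s) = C (s : R) * (X - C a) ^ s := by
  rcases s with _ | s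
  · simp
  · rw [derivative_X_sub_C_pow, Nat.add_sub_cancel]; push_cast; ring

theorem Polynomial.X_sub_C_mul_X_sub_C_mul_derivative_pow_mul_pow {R : Type*} [CommRing R] (a b : R)
    (s t : ℕ) :
    (X - C a) * (X - C b) * derivative ((X - C a) ^ s * (X - C b) ^ t) =
      (C (s : R) * (X - C b) + C (t : R) * (X - C a)) * ((X - C a) ^ s * (X - C b) ^ t) := by
  rw [derivative_mul]
  linear_combination (X - C b) * (X - C b) ^ t * X_sub_C_mul_derivative_X_sub_C_pow a s +
    (X - C a) * (X - C a) ^ s * X_sub_C_mul_derivative_X_sub_C_pow b t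

noncomputable def paperAOp (m : ℕ) : ℝ[X] →ₗ[ℝ] ℝ[X] :=
  (m : ℝ) • LinearMap.mulLeft ℝ X +
    LinearMap.mulLeft ℝ (C 2 + C 3 * X - X ^ 2) ∘ₗ derivative

theorem paperAOp_apply (m : ℕ) (p : ℝ[X]) :
    paperAOp m p = C (m : ℝ) * X * p + (C 2 + C 3 * X - X ^ 2) * derivative p := by
  simp [paperAOp, smul_eq_C_mul, mul_assoc]

-- For `j = 0` the last term vanishes, so the truncated exponent `j - 1` is harmless.
theorem paperAOp_X_pow (m j : ℕ) :
    paperAOp m (X ^ j) =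
      C ((m : ℝ) - j) * X ^ (j + 1) + C (3 * (j : ℝ)) * X ^ j +
        C (2 * (j : ℝ)) * X ^ (j - 1) := by
  rw [paperAOp_apply]
  rcases j with _ | k
  · simp
  · simp only [derivative_X_pow, Nat.add_sub_cancel, C_sub, C_mul, map_natCast]
    push_cast
    ring

theorem coeff_paperAOp_X_pow (m : ℕ) (i j : Fin (m + 1)) :
    (paperAOp m (X ^ (j : ℕ))).coeff i = paperA m i j := by
  simp only [paperAOp_X_pow, coeff_add, coeff_C_mul_X_pow, paperA, of_apply]
  generalize (i : ℕ) = a, (j : ℕ) = b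
  rcases b with _ | b <;> split_ifs <;>
    first | omega | contradiction | (subst_vars; push_cast; ring)

theorem paperA_mulVec_coeff (m : ℕ) {p : ℝ[X]} (hp : p.natDegree ≤ m) :
    paperA m *ᵥ (fun j => p.coeff j) = fun i : Fin (m + 1) => (paperAOp m p).coeff i := by
  ext i
  conv_rhs => rw [as_sum_range_C_mul_X_pow' p (Nat.lt_succ_of_le hp)]
  simp only [C_mul', map_sum, map_smul, finsetSum_coeff, coeff_smul, smul_eq_mul]
  rw [← Fin.sum_univ_eq_sum_range (fun j => p.coeff j * (paperAOp m (X ^ j)).coeff i)]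
  simp only [mulVec, dotProduct, coeff_paperAOp_X_pow, mul_comm]

noncomputable def paperEigenvalue (m s : ℕ) : ℝ :=
  3 * (m : ℝ) / 2 + ((m : ℝ) - 2 * (s : ℝ)) * √17 / 2

noncomputable def paperEigenpoly (m s : ℕ) : ℝ[X] :=
  (X - C ((3 + √17) / 2)) ^ s * (X - C ((3 - √17) / 2)) ^ (m - s)

theorem paperEigenvalue_injective (m : ℕ) : Function.Injective (paperEigenvalue m) := by
  intro s t h
  have h17 : (0 : ℝ) < √17 := by positivity
  have : ((s : ℝ) - t) * √17 = 0 := by unfold paperEigenvalue at h; linarith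
  exact_mod_cast sub_eq_zero.1 ((mul_eq_zero.1 this).resolve_right h17.ne')

theorem monic_paperEigenpoly (m s : ℕ) : (paperEigenpoly m s).Monic :=
  ((monic_X_sub_C _).pow s).mul ((monic_X_sub_C _).pow (m - s))

theorem natDegree_paperEigenpoly {m s : ℕ} (hs : s ≤ m) :
    (paperEigenpoly m s).natDegree = m := by
  rw [paperEigenpoly, ((monic_X_sub_C _).pow s).natDegree_mul ((monic_X_sub_C _).pow (m - s))]
  simp only [natDegree_pow, natDegree_X_sub_C]
  omega

theorem coeff_paperEigenpoly_self {m s : ℕ} (hs : s ≤ m) :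
    (paperEigenpoly m s).coeff m = 1 := by
  simpa [natDegree_paperEigenpoly hs] using (monic_paperEigenpoly m s).coeff_natDegree

theorem paperAOp_paperEigenpoly {m s : ℕ} (hs : s ≤ m) :
    paperAOp m (paperEigenpoly m s) = C (paperEigenvalue m s) * paperEigenpoly m s := by
  rw [paperAOp_apply, paperEigenpoly]
  set a := (3 + √17) / 2
  set b := (3 - √17) / 2
  have hsum : C a + C b = (C 3 : ℝ[X]) := by rw [← C_add]; congr 1; ring
  have hprod : C a * C b = (-C 2 : ℝ[X]) := by
    rw [← C_mul, ← C_neg]; congr 1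
    linear_combination (-1 / 4 : ℝ) * Real.sq_sqrt (show (0 : ℝ) ≤ 17 by norm_num)
  have hμ : C (paperEigenvalue m s) = C (s : ℝ) * C b + C ((m - s : ℕ) : ℝ) * C a := by
    rw [← C_mul, ← C_mul, ← C_add, Nat.cast_sub hs]; congr 1; unfold paperEigenvalue; ring
  have hm : C (m : ℝ) = C (s : ℝ) + C ((m - s : ℕ) : ℝ) := by
    rw [← C_add, ← Nat.cast_add, Nat.add_sub_cancel' hs]
  set q := (X - C a) ^ s * (X - C b) ^ (m - s)
  linear_combination (-1 : ℝ[X]) * X_sub_C_mul_X_sub_C_mul_derivative_pow_mul_pow a b s (m - s)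
    + X * q * hm - q * hμ + derivative q * (hprod - X * hsum)

noncomputable def paperEigenvector (m s : ℕ) : Fin (m + 1) → ℝ :=
  fun j => (paperEigenpoly m s).coeff j

theorem paperEigenvector_ne_zero {m s : ℕ} (hs : s ≤ m) : paperEigenvector m s ≠ 0 := fun h =>
  one_ne_zero ((coeff_paperEigenpoly_self hs).symm.trans (congrFun h (Fin.last m)))

theorem paperA_mulVec_paperEigenvector {m s : ℕ} (hs : s ≤ m) :
    paperA m *ᵥ paperEigenvector m s = paperEigenvalue m s • paperEigenvector m s := by
  unfold paperEigenvector
  rw [paperA_mulVec_coeff m (natDegree_paperEigenpoly hs).le,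
    paperAOp_paperEigenpoly hs]
  ext j
  simp [coeff_C_mul]

theorem charpoly_paperA_general (m : ℕ) :
    (paperA m).charpoly =
      ∏ s ∈ Finset.range (m + 1),
        (Polynomial.X -
          Polynomial.C (3 * (m : ℝ) / 2 + ((m : ℝ) - 2 * (s : ℝ)) * Real.sqrt 17 / 2)) := by
  change _ = ∏ s ∈ Finset.range (m + 1), (X - C (paperEigenvalue m s))
  rw [← Fin.prod_univ_eq_prod_range (fun s => X - C (paperEigenvalue m s))]
  exact (paperA m).charpoly_eq_prod_of_mulVec_eq_smul
    ((paperEigenvalue_injective m).comp Fin.val_injective)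
    (fun s => paperEigenvector_ne_zero s.is_le) (fun s => paperA_mulVec_paperEigenvector s.is_le)

/-- The characteristic polynomial of `A_m` factors as
`∏_{s=0}^{m} (X - (3m/2 + (m-2s)·√17/2))`, i.e. the eigenvalues of `A_m`
counted with multiplicity are `s·λ₁ + (m-s)·λ₂`, `s = 0,…,m`, where
`λ₁ = (3-√17)/2` and `λ₂ = (3+√17)/2`. -/
theorem charpoly_paperA (m : ℕ) (hm : 1 ≤ m) :
    (paperA m).charpoly =
      ∏ s ∈ Finset.range (m + 1),
        (Polynomial.X -
          Polynomial.C (3 * (m : ℝ) / 2 + ((m : ℝ) - 2 * (s : ℝ)) * Real.sqrt 17 / 2)) :=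
  charpoly_paperA_general m
end

section
/- Let m ≥ 1 be an integer, let A_m be the (m+1)×(m+1) real matrix defined below, and set C_m = A_m − (m−4)·I, where I is the (m+1)×(m+1) identity matrix. Then the eigenvalues of C_m are the numbers (m+8)/2 + (m−2s)·√17/2 for s = 0, 1, …, m; in particular none of these is zero, so det C_m ≠ 0 and C_m is invertible. -/
/-- The matrix `C_m = A_m - (m-4)·I` of the paper. -/
noncomputable def paperC (m : ℕ) : Matrix (Fin (m + 1)) (Fin (m + 1)) ℝ :=
  paperA m - ((m : ℝ) - 4) • (1 : Matrix (Fin (m + 1)) (Fin (m + 1)) ℝ)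

namespace PaperCAux

open Polynomial

noncomputable section

def aa : ℝ := (-3 - Real.sqrt 17)/2
def bb : ℝ := (-3 + Real.sqrt 17)/2

lemma hab_add : aa + bb = -3 := by unfold aa bb; ring
lemma hab_mul : aa * bb = -2 := by
  have h : Real.sqrt 17 ^ 2 = 17 := Real.sq_sqrt (by norm_num)
  unfold aa bb; nlinarith [h]

def pq (m s : ℕ) : ℝ[X] := (X + C aa)^s * (X + C bb)^(m-s)
def nu (m s : ℕ) : ℝ := -(s:ℝ)*bb - ((m:ℝ)-(s:ℝ))*aa

lemma hpow (p : ℝ[X]) (n : ℕ) : p * (C (n:ℝ) * p^(n-1)) = C (n:ℝ) * p^n := by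
  cases n with
  | zero => simp
  | succ k => rw [Nat.succ_sub_one]; ring

lemma key (m s : ℕ) (hsm : s ≤ m) :
    (C 2 + C 3 * X - X^2) * derivative (pq m s) + C (m:ℝ) * X * pq m s
      = C (nu m s) * pq m s := by
  have h1 : C aa * C bb = -C (2:ℝ) := by rw [← C_mul, hab_mul]; simp
  have h2 : C aa + C bb = -C (3:ℝ) := by rw [← C_add, hab_add]; simp
  have e1 := hpow (X + C aa) s
  have e2 := hpow (X + C bb) (m - s)
  have e3 : ((m - s : ℕ) : ℝ) = (m:ℝ) - s := by push_cast [hsm]; ring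
  rw [e3] at e2
  simp only [map_sub] at e2
  unfold pq nu
  rw [derivative_mul, derivative_pow, derivative_pow]
  simp only [derivative_add, derivative_X, derivative_C, add_zero, mul_one, e3,
    map_sub, map_neg, map_mul]
  linear_combination (-(X + C bb) * (X + C bb)^(m-s)) * e1 + (-(X + C aa) * (X + C aa)^s) * e2
    + (X * h2 + h1) * (C (s:ℝ) * (X + C aa)^(s-1) * (X + C bb)^(m-s)
        + (C (m:ℝ) - C (s:ℝ)) * (X + C aa)^s * (X + C bb)^(m-s-1))

lemma coeff_id (m s n : ℕ) (hsm : s ≤ m) :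
    2*((n:ℝ)+1) * (pq m s).coeff (n+1) + 3*(n:ℝ) * (pq m s).coeff n
      + (if n = 0 then (0:ℝ) else ((m:ℝ) - (n:ℝ) + 1) * (pq m s).coeff (n-1))
    = nu m s * (pq m s).coeff n := by
  have hkey : C 2 * derivative (pq m s) + C 3 * (X * derivative (pq m s))
      - X * (X * derivative (pq m s)) + C (m:ℝ) * (X * pq m s) = C (nu m s) * pq m s := by
    linear_combination key m s hsm
  have h := congrArg (fun p => coeff p n) hkey
  simp only [coeff_add, coeff_sub, coeff_C_mul] at h
  match n with
  | 0 =>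
    simp [coeff_derivative] at h ⊢
    push_cast at h ⊢; linear_combination h
  | 1 =>
    simp [coeff_X_mul, coeff_derivative] at h ⊢
    push_cast at h ⊢; linear_combination h
  | (j+2) =>
    simp [coeff_X_mul, coeff_derivative] at h ⊢
    push_cast at h ⊢; linear_combination h

lemma pq_natDegree_le (m s : ℕ) (hsm : s ≤ m) : (pq m s).natDegree ≤ m := by
  unfold pq
  have ha : ((X + C aa: ℝ[X])^s).natDegree = s := by
    simp [natDegree_pow, natDegree_X_add_C]
  have hb : ((X + C bb: ℝ[X])^(m-s)).natDegree = m - s := by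
    simp [natDegree_pow, natDegree_X_add_C]
  refine le_trans natDegree_mul_le ?_
  rw [ha, hb]
  omega

lemma pq_coeff_zero (m s k : ℕ) (hsm : s ≤ m) (hk : m < k) : (pq m s).coeff k = 0 :=
  coeff_eq_zero_of_natDegree_lt (lt_of_le_of_lt (pq_natDegree_le m s hsm) hk)

lemma mulVec_eq (m s : ℕ) (hsm : s ≤ m) (i : Fin (m+1)) :
    (paperA m).mulVec (fun j : Fin (m+1) => (pq m s).coeff j) i =
      nu m s * (pq m s).coeff i := by
  have hi1 : (i:ℕ) ≤ m := by omega
  rw [Matrix.mulVec, dotProduct]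
  have hsplit : ∀ j : Fin (m+1), paperA m i j * (pq m s).coeff j =
      (if j = i then 3*((i:ℕ):ℝ) * (pq m s).coeff (i:ℕ) else 0)
    + (if (j:ℕ) = (i:ℕ)+1 then 2*(((i:ℕ):ℝ)+1) * (pq m s).coeff ((i:ℕ)+1) else 0)
    + (if (i:ℕ) = (j:ℕ)+1 then ((m:ℝ) - ((i:ℕ):ℝ) + 1) * (pq m s).coeff ((i:ℕ)-1) else 0) := by
    intro j
    simp only [paperA, Matrix.of_apply]
    by_cases h1 : (i:ℕ) = (j:ℕ)
    · have : j = i := by exact Fin.ext h1.symm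
      subst this
      simp
    · rw [if_neg h1, if_neg (by simp [Fin.ext_iff]; omega : ¬ j = i)]
      by_cases h2 : (j:ℕ) = (i:ℕ)+1
      · rw [if_pos h2, if_pos h2, if_neg (by omega), h2]
        ring
      · rw [if_neg h2, if_neg h2]
        by_cases h3 : (i:ℕ) = (j:ℕ)+1
        · rw [if_pos h3, if_pos h3]
          have hj : (j:ℕ) = (i:ℕ) - 1 := by omega
          rw [hj, Nat.cast_sub (by omega : 1 ≤ (i:ℕ))]
          push_cast
          ring
        · rw [if_neg h3, if_neg h3]
          simp
  rw [Finset.sum_congr rfl (fun j _ => hsplit j), Finset.sum_add_distrib,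
    Finset.sum_add_distrib]
  have hS1 : (∑ j : Fin (m+1), if j = i then 3*((i:ℕ):ℝ) * (pq m s).coeff (i:ℕ) else 0)
      = 3*((i:ℕ):ℝ) * (pq m s).coeff (i:ℕ) := by
    rw [Finset.sum_ite_eq' Finset.univ i]
    simp
  have hS2 : (∑ j : Fin (m+1), if (j:ℕ) = (i:ℕ)+1 then
        2*(((i:ℕ):ℝ)+1) * (pq m s).coeff ((i:ℕ)+1) else 0)
      = 2*(((i:ℕ):ℝ)+1) * (pq m s).coeff ((i:ℕ)+1) := by
    by_cases hi : (i:ℕ) < m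
    · have : ∀ j : Fin (m+1), ((j:ℕ) = (i:ℕ)+1) ↔ (j = ⟨(i:ℕ)+1, by omega⟩) := by
        intro j; rw [Fin.ext_iff]
      simp only [this]
      rw [Finset.sum_ite_eq' Finset.univ]
      simp
    · have hzero : (pq m s).coeff ((i:ℕ)+1) = 0 := pq_coeff_zero m s _ hsm (by omega)
      rw [hzero, mul_zero]
      apply Finset.sum_eq_zero
      intro j _
      rw [if_neg (by omega)]
  have hS3 : (∑ j : Fin (m+1), if (i:ℕ) = (j:ℕ)+1 then
        ((m:ℝ) - ((i:ℕ):ℝ) + 1) * (pq m s).coeff ((i:ℕ)-1) else 0)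
      = if (i:ℕ) = 0 then (0:ℝ) else ((m:ℝ) - ((i:ℕ):ℝ) + 1) * (pq m s).coeff ((i:ℕ)-1) := by
    by_cases hi : (i:ℕ) = 0
    · rw [if_pos hi]
      apply Finset.sum_eq_zero
      intro j _
      rw [if_neg (by omega)]
    · rw [if_neg hi]
      have : ∀ j : Fin (m+1), ((i:ℕ) = (j:ℕ)+1) ↔ (j = ⟨(i:ℕ)-1, by omega⟩) := by
        intro j; rw [Fin.ext_iff]; simp; omega
      simp only [this]
      rw [Finset.sum_ite_eq' Finset.univ]
      simp
  rw [hS1, hS2, hS3]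
  linear_combination coeff_id m s (i:ℕ) hsm

def ev (m s : ℕ) : ℝ := ((m : ℝ) + 8) / 2 + ((m : ℝ) - 2 * (s : ℝ)) * Real.sqrt 17 / 2

lemma nu_ev (m s : ℕ) : nu m s - ((m:ℝ) - 4) = ev m s := by
  unfold nu ev aa bb; ring

lemma pq_monic (m s : ℕ) : (pq m s).Monic :=
  ((monic_X_add_C aa).pow s).mul ((monic_X_add_C bb).pow (m-s))

lemma pq_natDegree (m s : ℕ) (hsm : s ≤ m) : (pq m s).natDegree = m := by
  unfold pq
  rw [natDegree_mul (by exact ((monic_X_add_C aa).pow s).ne_zero)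
    (by exact ((monic_X_add_C bb).pow (m-s)).ne_zero), natDegree_pow, natDegree_pow,
    natDegree_X_add_C, natDegree_X_add_C]
  omega

lemma pq_coeff_top (m s : ℕ) (hsm : s ≤ m) : (pq m s).coeff m = 1 := by
  have := (pq_monic m s).leadingCoeff
  rwa [leadingCoeff, pq_natDegree m s hsm] at this

lemma ev_root (m s : ℕ) (hsm : s ≤ m) : (paperC m).charpoly.IsRoot (ev m s) := by
  set v : Fin (m+1) → ℝ := fun j => (pq m s).coeff j with hv
  have hv0 : v ≠ 0 := by
    intro h
    have : v ⟨m, by omega⟩ = 0 := by rw [h]; rfl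
    rw [hv] at this
    simp only [pq_coeff_top m s hsm] at this
    exact one_ne_zero this
  have hCv : (paperC m).mulVec v = ev m s • v := by
    funext i
    rw [paperC, Matrix.sub_mulVec, Matrix.smul_mulVec, Matrix.one_mulVec]
    simp only [Pi.sub_apply, Pi.smul_apply, smul_eq_mul]
    rw [mulVec_eq m s hsm i, ← nu_ev m s]
    ring
  have hker : (ev m s • (1 : Matrix (Fin (m+1)) (Fin (m+1)) ℝ) - paperC m).mulVec v = 0 := by
    rw [Matrix.sub_mulVec, Matrix.smul_mulVec, Matrix.one_mulVec, hCv, sub_self]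
  have hdet : (ev m s • (1 : Matrix (Fin (m+1)) (Fin (m+1)) ℝ) - paperC m).det = 0 :=
    Matrix.exists_mulVec_eq_zero_iff.mp ⟨v, hv0, hker⟩
  have heval : ((paperC m).charpoly).eval (ev m s) =
      (ev m s • (1 : Matrix (Fin (m+1)) (Fin (m+1)) ℝ) - paperC m).det := by
    rw [Matrix.charpoly, ← Polynomial.coe_evalRingHom, RingHom.map_det]
    congr 1
    ext i j
    simp only [RingHom.mapMatrix_apply, Matrix.map_apply, coe_evalRingHom, Matrix.sub_apply, Matrix.smul_apply,
      smul_eq_mul]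
    by_cases h : i = j
    · subst h
      rw [Matrix.charmatrix_apply_eq]
      simp [Matrix.one_apply_eq]
    · rw [Matrix.charmatrix_apply_ne _ _ _ h]
      simp [Matrix.one_apply_ne h]
  rw [IsRoot, heval, hdet]

lemma sqrt17_pos : (0:ℝ) < Real.sqrt 17 := Real.sqrt_pos.mpr (by norm_num)

lemma irrational_sqrt17 : Irrational (Real.sqrt 17) := by
  have := Nat.Prime.irrational_sqrt (p := 17) (by norm_num)
  simpa using this

lemma ev_injOn (m : ℕ) : ∀ s ∈ Finset.range (m+1), ∀ s' ∈ Finset.range (m+1),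
    ev m s = ev m s' → s = s' := by
  intro s _ s' _ h
  unfold ev at h
  have h2 : ((m:ℝ) - 2*s) * Real.sqrt 17 = ((m:ℝ) - 2*s') * Real.sqrt 17 := by linarith
  have h3 : ((m:ℝ) - 2*s) = ((m:ℝ) - 2*s') := mul_right_cancel₀ (ne_of_gt sqrt17_pos) h2
  have : (s:ℝ) = (s':ℝ) := by linarith
  exact_mod_cast this

lemma ev_ne_zero (m s : ℕ) : ev m s ≠ 0 := by
  intro h0
  unfold ev at h0
  rcases eq_or_ne ((m:ℝ) - 2*(s:ℝ)) 0 with hz | hz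
  · rw [hz] at h0
    have hm : (0:ℝ) ≤ (m:ℝ) := Nat.cast_nonneg m
    norm_num at h0
    linarith
  · have hsq : Real.sqrt 17 = -((m:ℝ)+8)/((m:ℝ)-2*(s:ℝ)) := by
      field_simp
      linarith
    apply irrational_sqrt17
    refine ⟨-((m:ℚ)+8)/((m:ℚ)-2*(s:ℚ)), ?_⟩
    rw [hsq]
    push_cast
    ring

end

end PaperCAux

open PaperCAux Polynomial in
/-- The eigenvalues of `C_m = A_m - (m-4)·I` are `(m+8)/2 + (m-2s)·√17/2`,
`s = 0,…,m`; in particular none of them vanishes, so `det C_m ≠ 0` and `C_m`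
is invertible. -/
theorem charpoly_paperC (m : ℕ) (hm : 1 ≤ m) :
    (paperC m).charpoly =
      (∏ s ∈ Finset.range (m + 1),
        (Polynomial.X -
          Polynomial.C (((m : ℝ) + 8) / 2 + ((m : ℝ) - 2 * (s : ℝ)) * Real.sqrt 17 / 2)))
    ∧ (∀ s ∈ Finset.range (m + 1),
        ((m : ℝ) + 8) / 2 + ((m : ℝ) - 2 * (s : ℝ)) * Real.sqrt 17 / 2 ≠ 0)
    ∧ (paperC m).det ≠ 0 ∧ IsUnit (paperC m) := by
  set p := (paperC m).charpoly with hp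
  set q := ∏ s ∈ Finset.range (m + 1), (X - C (ev m s)) with hqdef
  have hq_monic : q.Monic :=
    monic_prod_of_monic _ _ (fun s _ => monic_X_sub_C (ev m s))
  have hq_deg : q.natDegree = m + 1 := by
    rw [hqdef, natDegree_prod_of_monic _ _ (fun s _ => monic_X_sub_C (ev m s))]
    simp [natDegree_X_sub_C]
  have hp_monic : p.Monic := (paperC m).charpoly_monic
  have hp_deg : p.natDegree = m + 1 := by
    rw [hp, Matrix.charpoly_natDegree_eq_dim, Fintype.card_fin]
  have hq_eval : ∀ s ∈ Finset.range (m+1), q.eval (ev m s) = 0 := by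
    intro s hs
    rw [hqdef, eval_prod]
    exact Finset.prod_eq_zero hs (by simp)
  have heq : p = q := by
    by_cases hd : p - q = 0
    · exact sub_eq_zero.mp hd
    · exfalso
      apply hd
      set t := (Finset.range (m+1)).image (ev m) with ht
      have hcard : t.card = m + 1 := by
        rw [ht, Finset.card_image_of_injOn (fun a ha b hb => ev_injOn m a ha b hb),
          Finset.card_range]
      apply eq_zero_of_natDegree_lt_card_of_eval_eq_zero' (p - q) t
      · intro x hx
        rw [ht, Finset.mem_image] at hx
        obtain ⟨s, hs, rfl⟩ := hx
        rw [eval_sub, hq_eval s hs, sub_zero]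
        exact ev_root m s (Nat.lt_succ_iff.mp (Finset.mem_range.mp hs))
      · rw [hcard]
        have hpd : p.degree = ((m+1 : ℕ) : WithBot ℕ) := by
          rw [degree_eq_natDegree hp_monic.ne_zero, hp_deg]
        have hqd : q.degree = ((m+1 : ℕ) : WithBot ℕ) := by
          rw [degree_eq_natDegree hq_monic.ne_zero, hq_deg]
        have hdeg : (p - q).degree < ((m+1 : ℕ) : WithBot ℕ) := by
          rw [← hpd]
          exact degree_sub_lt (hpd.trans hqd.symm) hp_monic.ne_zero
            (by rw [hp_monic.leadingCoeff, hq_monic.leadingCoeff])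
        exact (natDegree_lt_iff_degree_lt hd).mpr hdeg
  have hcoeff0 : q.coeff 0 ≠ 0 := by
    rw [coeff_zero_eq_eval_zero, hqdef, eval_prod]
    rw [Finset.prod_ne_zero_iff]
    intro s _
    simp only [eval_sub, eval_X, eval_C, zero_sub, ne_eq, neg_eq_zero]
    exact ev_ne_zero m s
  have hdet : (paperC m).det ≠ 0 := by
    rw [Matrix.det_eq_sign_charpoly_coeff, ← hp, heq, Fintype.card_fin]
    exact mul_ne_zero (pow_ne_zero _ (by norm_num)) hcoeff0
  refine ⟨?_, ?_, hdet, (Matrix.isUnit_iff_isUnit_det _).mpr (isUnit_iff_ne_zero.mpr hdet)⟩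
  · rw [heq, hqdef]
    rfl
  · intro s _
    exact ev_ne_zero m s
end

section
/- Let m ≥ 1 be an integer, let B_m and A_m be the (m+1)×(m+1) real matrices defined below, and set C_m = A_m − (m−4)·I. Then det B_m = (1/4)·det C_m. -/
/-- The matrix `B_m` of the paper: first row `(B_m)_{0,j} = j + 1`, and for
`1 ≤ i ≤ m`: `(B_m)_{i,i} = 3i + 4 - m`, `(B_m)_{i,i-1} = m + 1 - i`,
`(B_m)_{i,i+1} = 2(i+1)`, all other entries `0`. -/
noncomputable def paperB (m : ℕ) : Matrix (Fin (m + 1)) (Fin (m + 1)) ℝ :=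
  Matrix.of fun i j =>
    if (i : ℕ) = 0 then ((j : ℕ) : ℝ) + 1
    else if (i : ℕ) = (j : ℕ) then 3 * ((i : ℕ) : ℝ) + 4 - (m : ℝ)
    else if (i : ℕ) = (j : ℕ) + 1 then (m : ℝ) + 1 - ((i : ℕ) : ℝ)
    else if (j : ℕ) = (i : ℕ) + 1 then 2 * (((i : ℕ) : ℝ) + 1)
    else 0


/-!
All rows of `B_m` except the first agree with those of `C_m`, and the first row
`(j + 1)_j` of `B_m` is a quarter of the sum of all rows of `C_m`, because every column of
`C_m` sums to `4 (j + 1)`. Replacing a row by `1/4` times the sum of all rows (itself included)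
multiplies the determinant by `1/4`.
-/

lemma Fin.sum_ite_val_eq {M : Type*} [AddCommMonoid M] (n a : ℕ) (c : M) :
    ∑ k : Fin n, (if (k : ℕ) = a then c else 0) = if a < n then c else 0 := by
  rw [Fin.sum_univ_eq_sum_range (fun k => if k = a then c else 0), Finset.sum_ite_eq']
  simp only [Finset.mem_range]

lemma paperC_apply (m : ℕ) (i j : Fin (m + 1)) :
    paperC m i j =
      if (i : ℕ) = j then 3 * (i : ℝ) + 4 - m
      else if (j : ℕ) = i + 1 then 2 * ((i : ℝ) + 1)
      else if (i : ℕ) = j + 1 then (m : ℝ) - j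
      else 0 := by
  rcases eq_or_ne i j with rfl | hij
  · simp only [paperC, paperA, Matrix.sub_apply, Matrix.of_apply, if_pos, Matrix.smul_apply,
      Matrix.one_apply_eq, smul_eq_mul, mul_one]
    ring
  · simp [paperC, paperA, hij, Fin.val_ne_of_ne hij]

/-- Column `j` holds `2j`, `3j + 4 - m`, `m - j` in rows `j - 1`, `j`, `j + 1`. At the boundary
(`j = 0`, where the truncated `j - 1` is `0`, and `j = m`) the offending entry is itself `0`, so
the generic sum `2j + (3j + 4 - m) + (m - j)` holds for every column. -/
lemma sum_paperC_col (m : ℕ) (j : Fin (m + 1)) :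
    ∑ k, paperC m k j = 4 * ((j : ℝ) + 1) := by
  have hcol : ∀ k : Fin (m + 1), paperC m k j =
      (if (k : ℕ) = j - 1 then 2 * (j : ℝ) else 0)
        + (if (k : ℕ) = j then 3 * (j : ℝ) + 4 - m else 0)
        + (if (k : ℕ) = j + 1 then (m : ℝ) - j else 0) := by
    intro k
    rw [paperC_apply]
    split_ifs <;> (try omega) <;> first
      | (rw [show (k : ℕ) = 0 by omega, show (j : ℕ) = 0 by omega]; simp)
      | (rw [show (k : ℕ) = j by omega]; ring)
      | (rw [show (j : ℕ) = k + 1 by omega]; push_cast; ring)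
      | ring
  simp only [hcol, Finset.sum_add_distrib, Fin.sum_ite_val_eq]
  have hj := j.isLt
  rcases (Nat.lt_succ_iff.mp hj).lt_or_eq with hjm | hjm
  · rw [if_pos (by omega), if_pos hj, if_pos (by omega)]
    ring
  · rw [if_pos (by omega), if_pos hj, if_neg (by omega), hjm]
    ring

lemma paperB_eq_updateRow (m : ℕ) :
    paperB m = (paperC m).updateRow 0 (∑ k, (1 / 4 : ℝ) • paperC m k) := by
  ext i j
  rcases eq_or_ne i 0 with rfl | hi
  · simp [paperB, ← Finset.mul_sum, sum_paperC_col]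
  · rw [Matrix.updateRow_ne hi, paperC_apply]
    simp only [paperB, Matrix.of_apply, Fin.val_eq_zero_iff, hi, if_false]
    split_ifs <;> first | omega | rfl | (rw [show (i : ℕ) = j + 1 by omega]; push_cast; ring)

theorem det_paperB_eq_general (m : ℕ) :
    (paperB m).det = (1 / 4) * (paperC m).det := by
  rw [paperB_eq_updateRow, Matrix.det_updateRow_sum, smul_eq_mul]

/-- `det B_m = (1/4) · det C_m`. -/
theorem det_paperB_eq (m : ℕ) (hm : 1 ≤ m) :
    (paperB m).det = (1 / 4) * (paperC m).det :=
  det_paperB_eq_general m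
end

section
/- For any two positive integers p and q, the inequality |√17 − p/q| > 2/(17·q²) is satisfied. -/
/-!
Multiplying `√17 - p/q` by its conjugate `√17 + p/q` and by `q²` gives the nonzero integer
`17 q² - p²`, so `|√17 - p/q| · (√17 + p/q) · q² ≥ 1`. Either `|√17 - p/q| > 2/17`, which already
suffices, or `p/q` is so close to `√17 < 4.13` that `√17 + p/q < 17/2`, and the bound follows.
-/

theorem one_le_abs_natCast_mul_sq_sub_sq {d : ℕ} (hd : Irrational √d) (p : ℕ) {q : ℕ}
    (hq : 0 < q) : 1 ≤ |(d : ℝ) * q ^ 2 - p ^ 2| := by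
  have hne : (d : ℤ) * q ^ 2 - p ^ 2 ≠ 0 := by
    intro h
    have hpq : (p : ℝ) ^ 2 = d * q ^ 2 := by exact_mod_cast (sub_eq_zero.mp h).symm
    apply hd.ne_rat (p / q)
    rw [Rat.cast_div, Rat.cast_natCast, Rat.cast_natCast,
      ← Real.sqrt_sq (by positivity : 0 ≤ (p : ℝ) / q), div_pow, hpq,
      mul_div_cancel_right₀ _ (by positivity)]
  exact_mod_cast Int.one_le_abs hne

theorem one_le_abs_sqrt_sub_div_mul {d : ℕ} (hd : Irrational √d) (p : ℕ) {q : ℕ} (hq : 0 < q) :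
    1 ≤ |√d - p / q| * (√d + p / q) * q ^ 2 := by
  have hsq : √(d : ℝ) ^ 2 = d := Real.sq_sqrt (Nat.cast_nonneg d)
  calc 1 ≤ |(d : ℝ) * q ^ 2 - p ^ 2| := one_le_abs_natCast_mul_sq_sub_sq hd p hq
    _ = |(√d - p / q) * (√d + p / q) * q ^ 2| := by
      congr 1
      field_simp
      linear_combination -(q : ℝ) ^ 2 * hsq
    _ = |√d - p / q| * (√d + p / q) * q ^ 2 := by
      rw [abs_mul, abs_mul, abs_of_nonneg (by positivity : 0 ≤ √(d : ℝ) + p / q),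
        abs_of_nonneg (by positivity : (0 : ℝ) ≤ q ^ 2)]

theorem sqrt17_diophantine_general (p q : ℕ) (hq : 0 < q) :
    |Real.sqrt 17 - (p : ℝ) / (q : ℝ)| > 2 / (17 * (q : ℝ) ^ 2) := by
  have hq1 : (1 : ℝ) ≤ q := by exact_mod_cast hq
  have hirr : Irrational √((17 : ℕ) : ℝ) := (by norm_num : Nat.Prime 17).irrational_sqrt
  have hlt : √(17 : ℝ) < 4.13 := (Real.sqrt_lt' (by norm_num)).2 (by norm_num)
  have hx : (0 : ℝ) ≤ p / q := by positivity
  rcases lt_or_ge (2 / 17) |√(17 : ℝ) - p / q| with hfar | hnear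
  · calc 2 / (17 * (q : ℝ) ^ 2) ≤ 2 / 17 := by
          gcongr
          nlinarith
      _ < _ := hfar
  · have hconj : √(17 : ℝ) + p / q < 17 / 2 := by
      linarith [(abs_le.1 hnear).1]
    have hlower := one_le_abs_sqrt_sub_div_mul hirr p hq
    push_cast at hlower
    have hpos : 0 < |√(17 : ℝ) - p / q| * q ^ 2 := by
      nlinarith [add_nonneg (Real.sqrt_nonneg 17) hx]
    rw [gt_iff_lt, div_lt_iff₀ (by positivity)]
    nlinarith [mul_lt_mul_of_pos_left hconj hpos]

/-- For any two positive integers `p, q`, one has `|√17 - p/q| > 2/(17·q²)`. -/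
theorem sqrt17_diophantine (p q : ℕ) (hp : 0 < p) (hq : 0 < q) :
    |Real.sqrt 17 - (p : ℝ) / (q : ℝ)| > 2 / (17 * (q : ℝ) ^ 2) :=
  sqrt17_diophantine_general p q hq
end

section
/- For every integer m ≥ 1 and every integer k with 0 ≤ k ≤ m, one has |k/m − 1/2 − (m+8)/(2m·√17)| > 1/(17²·m·(m+8)); equivalently, the reciprocal satisfies 1/|k/m − 1/2 − (m+8)/(2m√17)| < 17²·m·(m+8). (In particular the quantity k/m − 1/2 − (m+8)/(2m√17) never vanishes.) -/
set_option maxHeartbeats 1000000 in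

/-- For every integer `m ≥ 1` and `0 ≤ k ≤ m`, one has
`|k/m - 1/2 - (m+8)/(2m·√17)| > 1/(17²·m·(m+8))`; in particular the quantity
`k/m - 1/2 - (m+8)/(2m√17)` never vanishes and its reciprocal is bounded by
`17²·m·(m+8)`. -/
theorem singular_denominator_estimate (m k : ℕ) (hm : 1 ≤ m) (hk : k ≤ m) :
    |(k : ℝ) / (m : ℝ) - 1 / 2 - ((m : ℝ) + 8) / (2 * (m : ℝ) * Real.sqrt 17)|
      > 1 / (17 ^ 2 * (m : ℝ) * ((m : ℝ) + 8)) := by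
  have hm' : (1:ℝ) ≤ (m:ℝ) := by exact_mod_cast hm
  have hmpos : (0:ℝ) < (m:ℝ) := by linarith
  have hk' : (k:ℝ) ≤ (m:ℝ) := by exact_mod_cast hk
  have hk0 : (0:ℝ) ≤ (k:ℝ) := Nat.cast_nonneg k
  set s := Real.sqrt 17 with hs_def
  clear_value s
  have hs2 : s ^ 2 = 17 := by rw [hs_def]; exact Real.sq_sqrt (by norm_num)
  have hspos : 0 < s := by rw [hs_def]; exact Real.sqrt_pos.mpr (by norm_num)
  have hslt : s < 5 := by nlinarith
  set a : ℤ := 2 * (k:ℤ) - (m:ℤ) with ha_def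
  set b : ℤ := (m:ℤ) + 8 with hb_def
  clear_value a b
  have ha' : ((a:ℤ):ℝ) = 2*(k:ℝ) - (m:ℝ) := by rw [ha_def]; push_cast; ring
  have hb' : ((b:ℤ):ℝ) = (m:ℝ) + 8 := by rw [hb_def]; push_cast; ring
  have hb9 : (9:ℤ) ≤ b := by omega
  have hbR : (9:ℝ) ≤ (b:ℝ) := by exact_mod_cast hb9
  have haabs : |(a:ℝ)| ≤ (m:ℝ) := by
    rw [abs_le, ha']
    constructor <;> linarith
  -- key: 17 a² ≠ b²
  have hirr : Irrational s := by
    rw [hs_def]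
    exact_mod_cast (by norm_num : Nat.Prime 17).irrational_sqrt
  have hne : 17 * a ^ 2 ≠ b ^ 2 := by
    intro h
    have ha0 : a ≠ 0 := by
      intro h0
      rw [h0] at h
      simp at h
      nlinarith [hb9]
    have haR : (a:ℝ) ≠ 0 := Int.cast_ne_zero.mpr ha0
    have hR : (17:ℝ) * (a:ℝ)^2 = (b:ℝ)^2 := by exact_mod_cast h
    have hsq : ((b:ℝ)/(a:ℝ))^2 = 17 := by field_simp; linarith [hR]
    have hseq : s = |(b:ℝ)/(a:ℝ)| := by
      rw [hs_def, ← hsq, ← Real.sqrt_sq_eq_abs]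
    apply hirr
    refine ⟨|(b:ℚ)/(a:ℚ)|, ?_⟩
    rw [hseq]
    push_cast
    ring
  have key : (1:ℝ) ≤ |17 * (a:ℝ)^2 - (b:ℝ)^2| := by
    have h1 : 17 * a ^ 2 - b ^ 2 ≠ 0 := sub_ne_zero.mpr hne
    have h2 : (1:ℤ) ≤ |17 * a ^ 2 - b ^ 2| := Int.one_le_abs h1
    have h3 : ((1:ℤ):ℝ) ≤ ((|17 * a ^ 2 - b ^ 2| : ℤ) : ℝ) := by exact_mod_cast h2
    rw [Int.cast_abs] at h3
    push_cast at h3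
    exact h3
  -- rewrite the expression
  have hE : (k:ℝ)/(m:ℝ) - 1/2 - ((m:ℝ)+8)/(2*(m:ℝ)*s)
      = ((a:ℝ)*s - (b:ℝ))/(2*(m:ℝ)*s) := by
    have hmne : (m:ℝ) ≠ 0 := ne_of_gt hmpos
    have hsne : s ≠ 0 := ne_of_gt hspos
    rw [ha', hb']
    field_simp
  rw [hE, abs_div]
  set u := |(a:ℝ)*s - (b:ℝ)| with hu_def
  clear_value u
  have hu0 : 0 ≤ u := by rw [hu_def]; exact abs_nonneg _
  have habs_sum : |(a:ℝ)*s + (b:ℝ)| ≤ (m:ℝ)*s + (b:ℝ) := by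
    have h1 := abs_add_le ((a:ℝ)*s) ((b:ℝ))
    rw [abs_mul, abs_of_pos hspos, abs_of_nonneg (by linarith : (0:ℝ) ≤ (b:ℝ))] at h1
    nlinarith [mul_le_mul_of_nonneg_right haabs hspos.le]
  have hprod : u * |(a:ℝ)*s + (b:ℝ)| = |17 * (a:ℝ)^2 - (b:ℝ)^2| := by
    rw [hu_def, ← abs_mul]
    congr 1
    nlinarith [hs2]
  have hu1 : 1 ≤ u * ((m:ℝ)*s + (b:ℝ)) :=
    le_trans (le_trans key hprod.symm.le) (mul_le_mul_of_nonneg_left habs_sum hu0)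
  have hden : |2*(m:ℝ)*s| = 2*(m:ℝ)*s := abs_of_pos (by positivity)
  rw [hden, gt_iff_lt, div_lt_div_iff₀ (by positivity) (by positivity)]
  rw [hb'] at hu1
  have hP : (0:ℝ) < (m:ℝ)*s + ((m:ℝ)+8) := by positivity
  have hC : (0:ℝ) < 17^2*(m:ℝ)*((m:ℝ)+8) := by positivity
  have key2 : 2*(m:ℝ)*s * ((m:ℝ)*s + ((m:ℝ)+8)) < 17^2*(m:ℝ)*((m:ℝ)+8) := by
    have hexp : 2*(m:ℝ)*s * ((m:ℝ)*s + ((m:ℝ)+8)) = 34*(m:ℝ)^2 + 2*s*((m:ℝ)*((m:ℝ)+8)) := by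
      have hss : s * s = 17 := by nlinarith [hs2]
      nlinarith [hss, sq_nonneg ((m:ℝ))]
    have h1 : 34*(m:ℝ)^2 ≤ 34*((m:ℝ)*((m:ℝ)+8)) := by nlinarith [hmpos]
    have h2 : 2*s*((m:ℝ)*((m:ℝ)+8)) < 10*((m:ℝ)*((m:ℝ)+8)) := by
      have : (0:ℝ) < (m:ℝ)*((m:ℝ)+8) := by positivity
      nlinarith [this, hslt]
    have h3 : (17:ℝ)^2*(m:ℝ)*((m:ℝ)+8) = 289*((m:ℝ)*((m:ℝ)+8)) := by ring
    have : (0:ℝ) < (m:ℝ)*((m:ℝ)+8) := by positivity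
    linarith [hexp, h1, h2]
  have h4 : 2*(m:ℝ)*s < (17^2*(m:ℝ)*((m:ℝ)+8)) / ((m:ℝ)*s + ((m:ℝ)+8)) :=
    (lt_div_iff₀ hP).mpr key2
  have h5 : (17^2*(m:ℝ)*((m:ℝ)+8)) / ((m:ℝ)*s + ((m:ℝ)+8)) ≤ u * (17^2*(m:ℝ)*((m:ℝ)+8)) := by
    rw [div_le_iff₀ hP]
    nlinarith [mul_le_mul_of_nonneg_left hu1 hC.le]
  linarith [h4, h5]
end

section
/- Let n ≥ 1 and l ≥ 4 be integers, let e₁,…,eₙ ∈ {+1, −1}, and in the polynomial ring ℂ[z₁,…,zₙ, ζ₁,…,ζₙ] set h = e₁z₁ζ₁ + ⋯ + eₙzₙζₙ (the hyperquadric Hermitian form, with ζᵢ playing the role of the conjugate variable z̄ᵢ). Let F be a nonzero polynomial that is bihomogeneous of type (2, l−2), i.e., homogeneous of degree 2 in the variables z₁,…,zₙ and homogeneous of degree l−2 in the variables ζ₁,…,ζₙ. Then the n polynomials H_α = ∂(h·F)/∂z_α, for α = 1,…,n, are linearly independent over ℂ. -/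
/-!
Suppose `∑ α, c α • ∂(h F)/∂z_α = 0` and let `D = ∑ α, c α • ∂/∂z_α`, a derivation with
`D (h F) = 0`. Here `D h = ∑ α, c α e α ζ_α` is killed by `D`, so Leibniz' rule gives
`D^[k+1] (h F) = h D^[k+1] F + (k+1) D h D^[k] F`. As `F` has degree `2` in `z`, `D^[3] F = 0`;
descending through `k = 2, 1, 0` then forces `D² F = D F = F = 0` unless `D h = 0`,
and `D h = 0` means `c = 0`.
-/

open MvPolynomial

/-- Weight function picking out the degree in the `z`-variables (`Sum.inl`). -/
def zWeight (n : ℕ) : Fin n ⊕ Fin n → ℕ := Sum.elim (fun _ => 1) (fun _ => 0)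

/-- Weight function picking out the degree in the `ζ`-variables (`Sum.inr`). -/
def zetaWeight (n : ℕ) : Fin n ⊕ Fin n → ℕ := Sum.elim (fun _ => 0) (fun _ => 1)

namespace Derivation

variable {R A : Type*} [CommSemiring R] [CommSemiring A] [Algebra R A]

theorem iterate_succ_map_mul (D : Derivation R A A) {h : A} (hh : D (D h) = 0) (F : A) (k : ℕ) :
    D^[k + 1] (h * F) = h * D^[k + 1] F + (k + 1 : ℕ) • (D h * D^[k] F) := by
  induction k with
  | zero => simp [leibniz, mul_comm]
  | succ k ih =>
    rw [Function.iterate_succ_apply', ih, Function.iterate_succ_apply' _ (k + 1)]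
    simp only [map_add, map_nsmul, leibniz, hh, smul_eq_mul, Function.iterate_succ_apply']
    ring

theorem eq_zero_of_map_mul_eq_zero [NoZeroDivisors A] [CharZero A] (D : Derivation R A A)
    {h F : A} (hh : D (D h) = 0) (hDh : D h ≠ 0) (hhF : D (h * F) = 0) {k : ℕ}
    (hk : D^[k] F = 0) : F = 0 := by
  induction k with
  | zero => exact hk
  | succ k ih =>
    refine ih ?_
    have hzero : D^[k + 1] (h * F) = 0 := by
      rw [Function.iterate_succ_apply, hhF, Function.iterate_fixed D.map_zero]
    rw [iterate_succ_map_mul D hh, hk, mul_zero, zero_add, nsmul_eq_mul] at hzero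
    simpa [hDh, Nat.cast_add_one_ne_zero] using hzero

end Derivation

namespace MvPolynomial

variable {R σ ι : Type*} [CommSemiring R] {φ : MvPolynomial σ R}

theorem pderiv_eq_zero_of_isWeightedHomogeneous {w : σ → ℕ} {n : ℕ} {i : σ}
    (h : φ.IsWeightedHomogeneous w n) (hi : n < w i) : pderiv i φ = 0 := by
  ext m
  rw [coeff_pderiv, coeff_zero]
  by_contra hm
  have := h (left_ne_zero_of_mul hm)
  rw [map_add, Finsupp.weight_single, one_smul] at this
  omega

theorem sum_smul_pderiv_apply [Fintype ι] (v : ι → σ) (c : ι → R) :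
    (∑ a, c a • pderiv (v a) : Derivation R (MvPolynomial σ R) (MvPolynomial σ R)) φ =
      ∑ a, c a • pderiv (v a) φ := by
  rw [← Derivation.coeFnAddMonoidHom_apply, map_sum, Finset.sum_apply]
  rfl

theorem iterate_sum_smul_pderiv_eq_zero [Fintype ι] {w : σ → ℕ} (v : ι → σ)
    (hv : ∀ a, w (v a) = 1) (c : ι → R) {m : ℕ} (h : φ.IsWeightedHomogeneous w m) :
    (⇑(∑ a, c a • pderiv (v a)))^[m + 1] φ = 0 := by
  induction m generalizing φ with
  | zero =>
    simp [sum_smul_pderiv_apply, pderiv_eq_zero_of_isWeightedHomogeneous h, hv]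
  | succ m ih =>
    rw [Function.iterate_succ_apply]
    refine ih ?_
    rw [sum_smul_pderiv_apply, ← mem_weightedHomogeneousSubmodule]
    exact Submodule.sum_mem _ fun a _ => Submodule.smul_mem _ _ (h.pderiv (by rw [hv]))

end MvPolynomial

section Hyperquadric

variable {R ι : Type*} [CommSemiring R] [Fintype ι]

noncomputable def hyperquadric (e : ι → R) : MvPolynomial (ι ⊕ ι) R :=
  ∑ i, C (e i) * X (Sum.inl i) * X (Sum.inr i)

theorem hyperquadric_isWeightedHomogeneous (e : ι → R) :
    (hyperquadric e).IsWeightedHomogeneous (Sum.elim (fun _ => 1) (fun _ => 0)) 1 := by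
  refine IsWeightedHomogeneous.sum _ _ _ fun i _ => ?_
  simpa using ((isWeightedHomogeneous_C _ (e i)).mul (isWeightedHomogeneous_X R _ (Sum.inl i))).mul
    (isWeightedHomogeneous_X R (Sum.elim (fun _ => 1) (fun _ => 0) : ι ⊕ ι → ℕ) (Sum.inr i))

theorem pderiv_inl_hyperquadric [DecidableEq ι] (e : ι → R) (α : ι) :
    pderiv (Sum.inl α) (hyperquadric e) = C (e α) * X (Sum.inr α) := by
  simp [hyperquadric, pderiv_X, Pi.single_apply, mul_comm]

theorem sum_smul_pderiv_inl_hyperquadric_ne_zero [DecidableEq ι] {e c : ι → R} {β : ι}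
    (hβ : c β * e β ≠ 0) :
    (∑ α, c α • pderiv (Sum.inl α) : Derivation R _ _) (hyperquadric e) ≠ 0 := by
  intro h
  apply hβ
  have := congrArg (coeff (Finsupp.single (Sum.inr β) 1)) h
  simpa [sum_smul_pderiv_apply, pderiv_inl_hyperquadric, coeff_sum, coeff_C_mul, coeff_X,
    Finsupp.single_left_inj] using this

end Hyperquadric

theorem pderiv_hermitian_mul_linearIndependent_general
    (n : ℕ)
    (e : Fin n → ℂ) (he : ∀ i, e i = 1 ∨ e i = -1)
    (F : MvPolynomial (Fin n ⊕ Fin n) ℂ) (hF : F ≠ 0)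
    (hFz : F.IsWeightedHomogeneous (zWeight n) 2) :
    LinearIndependent ℂ
      (fun α : Fin n =>
        MvPolynomial.pderiv (Sum.inl α)
          ((∑ i : Fin n, MvPolynomial.C (e i) *
              MvPolynomial.X (Sum.inl i) * MvPolynomial.X (Sum.inr i)) * F)) := by
  rw [Fintype.linearIndependent_iff]
  intro c hc β
  by_contra hcβ
  set D : Derivation ℂ (MvPolynomial (Fin n ⊕ Fin n) ℂ) _ := ∑ α, c α • pderiv (Sum.inl α)
  have hz : ∀ α, zWeight n (Sum.inl α) = 1 := fun _ => rfl
  have heβ : e β ≠ 0 := by rcases he β with h | h <;> simp [h]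
  have hDh : D (hyperquadric e) ≠ 0 :=
    sum_smul_pderiv_inl_hyperquadric_ne_zero (mul_ne_zero hcβ heβ)
  have hDDh : D (D (hyperquadric e)) = 0 :=
    iterate_sum_smul_pderiv_eq_zero _ hz c (hyperquadric_isWeightedHomogeneous e)
  have hD3F : D^[3] F = 0 := iterate_sum_smul_pderiv_eq_zero _ hz c hFz
  have hDhF : D (hyperquadric e * F) = 0 := by rw [sum_smul_pderiv_apply]; exact hc
  exact hF (D.eq_zero_of_map_mul_eq_zero hDDh hDh hDhF hD3F)

/-- Let `h = e₁ z₁ ζ₁ + ⋯ + eₙ zₙ ζₙ` with each `eᵢ = ±1`, and let `F ≠ 0` be a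
polynomial bihomogeneous of type `(2, l-2)`, i.e. homogeneous of degree `2` in
the `z`-variables and of degree `l-2` in the `ζ`-variables, with `l ≥ 4`.
Then the `n` polynomials `H_α = ∂(h·F)/∂z_α`, `α = 1,…,n`, are linearly
independent over `ℂ`. -/
theorem pderiv_hermitian_mul_linearIndependent
    (n l : ℕ) (hn : 1 ≤ n) (hl : 4 ≤ l)
    (e : Fin n → ℂ) (he : ∀ i, e i = 1 ∨ e i = -1)
    (F : MvPolynomial (Fin n ⊕ Fin n) ℂ) (hF : F ≠ 0)
    (hFz : F.IsWeightedHomogeneous (zWeight n) 2)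
    (hFzeta : F.IsWeightedHomogeneous (zetaWeight n) (l - 2)) :
    LinearIndependent ℂ
      (fun α : Fin n =>
        MvPolynomial.pderiv (Sum.inl α)
          ((∑ i : Fin n, MvPolynomial.C (e i) *
              MvPolynomial.X (Sum.inl i) * MvPolynomial.X (Sum.inr i)) * F)) :=
  pderiv_hermitian_mul_linearIndependent_general n e he F hF hFz
end
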